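/- arXiv:1411.7657 — 5 statements merged into one kernel-verified Lean document; each statement's English description precedes it below -/
import Mathlib

section
/- Let m, d, n be positive integers with n odd. If there exists a Langford sequence of order m and defect d, then there exists a Langford sequence of order mn and defect nd - (n-1)/2. -/
/-- A Langford sequence of order `m` and defect `d`, modeled as a function
`l : Fin (2*m) → ℕ` (position `t : Fin (2*m)` corresponds to subscript `t+1`):
for every `k ∈ [d, d+m-1]` there are exactly two subscripts carrying the value `k`,
and they differ by exactly `k`. -/
def IsLangford (m d : ℕ) (l : Fin (2 * m) → ℕ) : Prop :=
  ∀ k : ℕ, d ≤ k → k ≤ d + m - 1 →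
    ∃ i j : Fin (2 * m), i < j ∧ (j : ℕ) - (i : ℕ) = k ∧
      (∀ t : Fin (2 * m), l t = k ↔ t = i ∨ t = j)

def uLf (n e r : ℕ) : ℕ := if r % 2 = 0 then e - r / 2 else e + (n - r) / 2
def uRf (n e r : ℕ) : ℕ := if r ≤ e then e - r else e + n - r

lemma uLf_lt {n e : ℕ} (hne : n = 2 * e + 1) (r : ℕ) (hr : r < n) : uLf n e r < n := by
  simp only [uLf]; split <;> omega
lemma uRf_lt {n e : ℕ} (hne : n = 2 * e + 1) (r : ℕ) (hr : r < n) : uRf n e r < n := by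
  simp only [uRf]; split <;> omega
lemma uLf_inj {n e r1 r2 : ℕ} (hne : n = 2 * e + 1) (h1 : r1 < n) (h2 : r2 < n)
    (h : uLf n e r1 = uLf n e r2) : r1 = r2 := by
  simp only [uLf] at h; split_ifs at h <;> omega
lemma uRf_inj {n e r1 r2 : ℕ} (hne : n = 2 * e + 1) (h1 : r1 < n) (h2 : r2 < n)
    (h : uRf n e r1 = uRf n e r2) : r1 = r2 := by
  simp only [uRf] at h; split_ifs at h <;> omega
lemma pair_unique {n a b u v : ℕ} (hn : 0 < n) (hu : u < n) (hv : v < n)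
    (h : n * a + u = n * b + v) : a = b ∧ u = v := by
  have h1 : a = b := by
    have h2 : (n * a + u) / n = (n * b + v) / n := by rw [h]
    rwa [Nat.mul_add_div hn, Nat.mul_add_div hn, Nat.div_eq_of_lt hu, Nat.div_eq_of_lt hv] at h2
  subst h1
  omega

lemma langford_total {m d : ℕ} (l : Fin (2 * m) → ℕ) (hL : IsLangford m d l) :
    ∀ t : Fin (2 * m), d ≤ l t ∧ l t ≤ d + m - 1 := by
  classical
  have hpair : ∀ k : Fin m, ∃ ij : Fin (2 * m) × Fin (2 * m), ij.1 < ij.2 ∧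
      ((ij.2 : ℕ) - (ij.1 : ℕ) = d + k) ∧ ∀ t, l t = d + k ↔ t = ij.1 ∨ t = ij.2 := by
    intro k
    obtain ⟨i, j, h1, h2, h3⟩ := hL (d + k) (Nat.le_add_right _ _) (by have := k.isLt; omega)
    exact ⟨(i, j), h1, h2, h3⟩
  choose P hP1 hP2 hP3 using hpair
  set F : Fin m × Bool → Fin (2 * m) := fun x => if x.2 then (P x.1).2 else (P x.1).1 with hF
  have hFval : ∀ x : Fin m × Bool, l (F x) = d + (x.1 : ℕ) := by
    rintro ⟨a, b⟩
    cases b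
    · rw [hF]; exact (hP3 a _).mpr (Or.inl rfl)
    · rw [hF]; exact (hP3 a _).mpr (Or.inr rfl)
  have hFinj : Function.Injective F := by
    rintro ⟨a, b⟩ ⟨a', b'⟩ hxy
    have hx := hFval (a, b)
    have hy := hFval (a', b')
    rw [hxy] at hx
    have haa : a = a' := Fin.ext (by simp only at hx hy; omega)
    subst haa
    cases b <;> cases b'
    · rfl
    · exfalso
      rw [hF] at hxy
      simp at hxy
      have h2 := hP1 a
      rw [hxy] at h2
      exact lt_irrefl _ h2
    · exfalso
      rw [hF] at hxy
      simp at hxy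
      have h2 := hP1 a
      rw [hxy] at h2
      exact lt_irrefl _ h2
    · rfl
  have hcard : Fintype.card (Fin m × Bool) = Fintype.card (Fin (2 * m)) := by
    simp [Fintype.card_prod]; ring
  have hFbij : Function.Bijective F := (Fintype.bijective_iff_injective_and_card F).mpr ⟨hFinj, hcard⟩
  intro t
  obtain ⟨x, hx⟩ := hFbij.2 t
  have h1 := hFval x
  rw [hx] at h1
  have h2 := x.1.isLt
  omega


/-- If there exists a Langford sequence of order `m` and defect `d`, then for every odd
positive `n` there exists a Langford sequence of order `m*n` and defect `n*d - (n-1)/2`. -/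
theorem langford_product (m d n : ℕ) (hm : 0 < m) (hd : 0 < d) (hn : 0 < n)
    (hodd : Odd n) (h : ∃ l : Fin (2 * m) → ℕ, IsLangford m d l) :
    ∃ l' : Fin (2 * (m * n)) → ℕ, IsLangford (m * n) (n * d - (n - 1) / 2) l' := by
  classical
  obtain ⟨l, hL⟩ := h
  obtain ⟨e, he⟩ := hodd
  have hne : n = 2 * e + 1 := by omega
  have he2 : (n - 1) / 2 = e := by omega
  have htot := langford_total l hL
  have htb : ∀ p : Fin (2 * (m * n)), (p : ℕ) / n < 2 * m := by
    intro p
    have hp := p.isLt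
    have h1 : 2 * m * n = 2 * (m * n) := by ring
    exact (Nat.div_lt_iff_lt_mul hn).mpr (by omega)
  set l' : Fin (2 * (m * n)) → ℕ := fun p =>
    n * l ⟨(p : ℕ) / n, htb p⟩ - e +
      (if ∃ t' : Fin (2 * m), (⟨(p : ℕ) / n, htb p⟩ : Fin (2 * m)) < t' ∧
          l t' = l ⟨(p : ℕ) / n, htb p⟩
        then uLf n e ((p : ℕ) % n) else uRf n e ((p : ℕ) % n)) with hl'
  have heval : ∀ (p : Fin (2 * (m * n))) (t : Fin (2 * m)) (r : ℕ),
      (p : ℕ) = n * (t : ℕ) + r → r < n →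
      l' p = n * l t - e +
        (if ∃ t' : Fin (2 * m), t < t' ∧ l t' = l t then uLf n e r else uRf n e r) := by
    intro p t r hpt hr
    have h1 : (p : ℕ) / n = (t : ℕ) := by
      rw [hpt, Nat.mul_add_div hn, Nat.div_eq_of_lt hr]
      omega
    have h2 : (p : ℕ) % n = r := by rw [hpt, Nat.mul_add_mod, Nat.mod_eq_of_lt hr]
    have h3 : (⟨(p : ℕ) / n, htb p⟩ : Fin (2 * m)) = t := Fin.ext h1
    simp only [hl']
    rw [h3, h2]
  refine ⟨l', ?_⟩
  rw [he2]
  intro K hK1 hK2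
  have hnd : n ≤ n * d := Nat.le_mul_of_pos_right n hd
  have hmn : 0 < m * n := Nat.mul_pos hm hn
  obtain ⟨k, u, hKnk, hu⟩ : ∃ k u, n * k + u = K + e ∧ u < n :=
    ⟨_, _, Nat.div_add_mod _ n, Nat.mod_lt _ hn⟩
  have hdk : d ≤ k := by
    by_contra hc
    push_neg at hc
    have h1 : n * (k + 1) ≤ n * d := Nat.mul_le_mul_left n (by omega)
    have h2 : n * (k + 1) = n * k + n := by ring
    omega
  have hkdm : k < d + m := by
    by_contra hc
    push_neg at hc
    have h1 : n * (d + m) ≤ n * k := Nat.mul_le_mul_left n hc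
    have h2 : n * (d + m) = n * d + m * n := by ring
    omega
  have hnk : n ≤ n * k := Nat.le_mul_of_pos_right n (by omega)
  obtain ⟨i, j, hij, hdiff, hiff⟩ := hL k hdk (by omega)
  have hijv : (i : ℕ) < (j : ℕ) := hij
  have hnij : n * (j : ℕ) = n * (i : ℕ) + n * k := by
    have h1 : (j : ℕ) = (i : ℕ) + k := by omega
    rw [h1, Nat.mul_add]
  obtain ⟨rL, rR, hrLn, hrRn, hrLu, hrRu, hdr⟩ :
      ∃ rL rR, rL < n ∧ rR < n ∧ uLf n e rL = u ∧ uRf n e rR = u ∧ n * k + rR = rL + K := by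
    refine ⟨if u ≤ e then 2 * (e - u) else n - 2 * (u - e),
      if u ≤ e then e - u else e + n - u, ?_, ?_, ?_, ?_, ?_⟩ <;>
      (try simp only [uLf, uRf]) <;> split_ifs <;> omega
  have hIlt : n * (i : ℕ) + rL < 2 * (m * n) := by
    have h1 : (i : ℕ) + 1 ≤ 2 * m := i.isLt
    have h2 : n * ((i : ℕ) + 1) ≤ n * (2 * m) := Nat.mul_le_mul_left n h1
    have h3 : n * ((i : ℕ) + 1) = n * (i : ℕ) + n := by ring
    have h4 : n * (2 * m) = 2 * (m * n) := by ring
    omega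
  have hJlt : n * (j : ℕ) + rR < 2 * (m * n) := by
    have h1 : (j : ℕ) + 1 ≤ 2 * m := j.isLt
    have h2 : n * ((j : ℕ) + 1) ≤ n * (2 * m) := Nat.mul_le_mul_left n h1
    have h3 : n * ((j : ℕ) + 1) = n * (j : ℕ) + n := by ring
    have h4 : n * (2 * m) = 2 * (m * n) := by ring
    omega
  have hIval : l i = k := (hiff i).mpr (Or.inl rfl)
  have hJval : l j = k := (hiff j).mpr (Or.inr rfl)
  have hleft_i : ∃ t' : Fin (2 * m), i < t' ∧ l t' = l i := ⟨j, hij, by rw [hIval, hJval]⟩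
  have hnotleft_j : ¬∃ t' : Fin (2 * m), j < t' ∧ l t' = l j := by
    rintro ⟨t', h1, h2⟩
    rw [hJval] at h2
    have h1v : (j : ℕ) < (t' : ℕ) := h1
    rcases (hiff t').mp h2 with h3 | h3 <;>
      · have h4 := congrArg Fin.val h3
        omega
  refine ⟨⟨n * (i : ℕ) + rL, hIlt⟩, ⟨n * (j : ℕ) + rR, hJlt⟩, ?_, ?_, ?_⟩
  · show n * (i : ℕ) + rL < n * (j : ℕ) + rR
    omega
  · show (n * (j : ℕ) + rR) - (n * (i : ℕ) + rL) = K
    omega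
  · intro p
    have hpmod : (p : ℕ) % n < n := Nat.mod_lt _ hn
    constructor
    · intro hval
      obtain ⟨hd1, hd2⟩ := htot ⟨(p : ℕ) / n, htb p⟩
      have hnlt : n ≤ n * l ⟨(p : ℕ) / n, htb p⟩ := Nat.le_mul_of_pos_right n (by omega)
      have hval' := heval p ⟨(p : ℕ) / n, htb p⟩ ((p : ℕ) % n) (Nat.div_add_mod _ n).symm hpmod
      rw [hval] at hval'
      by_cases hLft : ∃ t' : Fin (2 * m), (⟨(p : ℕ) / n, htb p⟩ : Fin (2 * m)) < t' ∧
          l t' = l ⟨(p : ℕ) / n, htb p⟩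
      · rw [if_pos hLft] at hval'
        have hult : uLf n e ((p : ℕ) % n) < n := uLf_lt hne _ hpmod
        have heq : n * l ⟨(p : ℕ) / n, htb p⟩ + uLf n e ((p : ℕ) % n) = n * k + u := by omega
        obtain ⟨hdiv, hmodu⟩ := pair_unique hn hult hu heq
        have hreq : (p : ℕ) % n = rL := uLf_inj hne hpmod hrLn (by rw [hmodu, hrLu])
        obtain ⟨t', ht1, ht2⟩ := hLft
        rw [hdiv] at ht2
        rcases (hiff ⟨(p : ℕ) / n, htb p⟩).mp hdiv with h3 | h3
        · left
          apply Fin.ext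
          have h4 : (p : ℕ) / n = (i : ℕ) := congrArg Fin.val h3
          show (p : ℕ) = n * (i : ℕ) + rL
          have h5 := Nat.div_add_mod (p : ℕ) n
          have h6 : n * ((p : ℕ) / n) = n * (i : ℕ) := by rw [h4]
          omega
        · exfalso
          have h4 : (p : ℕ) / n = (j : ℕ) := congrArg Fin.val h3
          have h5 : (p : ℕ) / n < (t' : ℕ) := ht1
          rcases (hiff t').mp ht2 with h6 | h6 <;>
            · have h7 := congrArg Fin.val h6
              omega
      · rw [if_neg hLft] at hval'
        have hult : uRf n e ((p : ℕ) % n) < n := uRf_lt hne _ hpmod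
        have heq : n * l ⟨(p : ℕ) / n, htb p⟩ + uRf n e ((p : ℕ) % n) = n * k + u := by omega
        obtain ⟨hdiv, hmodu⟩ := pair_unique hn hult hu heq
        have hreq : (p : ℕ) % n = rR := uRf_inj hne hpmod hrRn (by rw [hmodu, hrRu])
        rcases (hiff ⟨(p : ℕ) / n, htb p⟩).mp hdiv with h3 | h3
        · exfalso
          apply hLft
          refine ⟨j, ?_, ?_⟩
          · rw [h3]; exact hij
          · rw [h3, hJval, hIval]
        · right
          apply Fin.ext
          have h4 : (p : ℕ) / n = (j : ℕ) := congrArg Fin.val h3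
          show (p : ℕ) = n * (j : ℕ) + rR
          have h5 := Nat.div_add_mod (p : ℕ) n
          have h6 : n * ((p : ℕ) / n) = n * (j : ℕ) := by rw [h4]
          omega
    · intro hp
      rcases hp with h3 | h3
      · subst h3
        have h4 := heval ⟨n * (i : ℕ) + rL, hIlt⟩ i rL rfl hrLn
        rw [if_pos hleft_i, hIval, hrLu] at h4
        rw [h4]
        omega
      · subst h3
        have h4 := heval ⟨n * (j : ℕ) + rR, hJlt⟩ j rR rfl hrRn
        rw [if_neg hnotleft_j, hJval, hrRu] at h4
        rw [h4]
        omega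
end

section
/- Let m, d, n be positive integers with n odd, and set d' = nd - (n-1)/2. Then λ_{mn}^{d'} ≥ s(n)^m · λ_m^d, where λ_m^d denotes the number of Langford sequences of order m and defect d, and s(n) denotes the number of permutations σ of {1,...,n} for which the set {i + σ(i) : 1 ≤ i ≤ n} consists of n consecutive integers. -/
/-- `λ_m^d`: the number of Langford sequences of order `m` and defect `d`. -/
noncomputable def langfordCount (m d : ℕ) : ℕ :=
  Nat.card {l : Fin (2 * m) → ℕ // IsLangford m d l}

/-- A super edge-magic permutation of `{1,…,n}` (modeled on `Fin n` via the shift by `1`):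
the set of sums `{i + σ(i)}` consists of `n` consecutive integers. -/
def IsSEMPerm (n : ℕ) (σ : Equiv.Perm (Fin n)) : Prop :=
  ∃ s : ℕ,
    Finset.image (fun i : Fin n => ((i : ℕ) + 1) + ((σ i : ℕ) + 1)) Finset.univ =
      Finset.Icc s (s + n - 1)

/-- `s(n)`: the number of super edge-magic permutations of `{1,…,n}`. -/
noncomputable def semPermCount (n : ℕ) : ℕ :=
  Nat.card {σ : Equiv.Perm (Fin n) // IsSEMPerm n σ}

/-! Blow each position of a Langford sequence `l` of order `m` and defect `d` up into a block of
`n = 2h + 1` positions. For the pair of `l` at distance `k`, a super edge-magic permutation `σ`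
pairs offset `j` of the first block with offset `n - 1 - σ j` of the second, at distance
`nk + 2h - (j + σ j)`. The sums `j + σ j` are exactly `h, …, 3h`, so the pairs coming from `k`
realise the distances `nk - h, …, nk + h`, and over `k = d, …, d + m - 1` every distance in
`[nd - h, nd - h + mn - 1]` once. The value at a position determines `l` (as `(value + h) / n`)
and then the permutations, so the construction is injective. -/

open Finset Function Equiv

section SuperEdgeMagic

variable {n h : ℕ} {σ : Perm (Fin n)}

theorem IsSEMPerm.injective_add (hσ : IsSEMPerm n σ) :
    Injective fun i : Fin n => (i : ℕ) + σ i := by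
  obtain _ | n := n
  · exact fun i => i.elim0
  obtain ⟨s, hs⟩ := hσ
  have hinj : Set.InjOn (fun i : Fin (n + 1) => ((i : ℕ) + 1) + ((σ i : ℕ) + 1)) Set.univ := by
    rw [← coe_univ, ← card_image_iff, hs, Nat.card_Icc, card_univ, Fintype.card_fin]
    omega
  exact fun i j hij => hinj (Set.mem_univ i) (Set.mem_univ j) (by simp only at hij ⊢; omega)

/-- Comparing `∑ (i + σ i) = 2 ∑ i` with the sum of `n` consecutive integers pins down where
they start. -/
theorem IsSEMPerm.image_add (hn : n = 2 * h + 1) (hσ : IsSEMPerm n σ) :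
    univ.image (fun i : Fin n => (i : ℕ) + σ i) = Icc h (3 * h) := by
  have hinj := hσ.injective_add
  obtain ⟨s, hs⟩ := hσ
  set R := ∑ i ∈ range n, i
  have hR : R * 2 = n * (n - 1) := sum_range_id_mul_two n
  have hsum : ∑ i : Fin n, (((i : ℕ) + 1) + ((σ i : ℕ) + 1)) = ∑ x ∈ Icc s (s + n - 1), x := by
    rw [← hs, sum_image fun i _ j _ hij => hinj (by simp only at hij ⊢; omega)]
  have hleft : ∑ i : Fin n, (((i : ℕ) + 1) + ((σ i : ℕ) + 1)) = 2 * R + 2 * n := by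
    simp only [sum_add_distrib, Equiv.sum_comp σ (fun i : Fin n => (i : ℕ)),
      Fin.sum_univ_eq_sum_range (fun i => i) n, sum_const, card_univ, Fintype.card_fin,
      smul_eq_mul, R]
    ring
  have hright : ∑ x ∈ Icc s (s + n - 1), x = n * s + R := by
    rw [show s + n - 1 = s + 2 * h by omega, ← Ico_add_one_right_eq_Icc, sum_Ico_eq_sum_range,
      sum_add_distrib, sum_const, card_range, smul_eq_mul, show s + 2 * h + 1 - s = n by omega]
  have hs2 : s = h + 2 := by
    subst hn
    have : (2 * h + 1) * s = (2 * h + 1) * (h + 2) := by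
      rw [Nat.add_sub_cancel] at hR
      nlinarith [hsum.symm.trans hleft ▸ hright]
    exact Nat.eq_of_mul_eq_mul_left (by omega) this
  subst hs2
  ext v
  simp only [mem_image, mem_univ, true_and, mem_Icc]
  constructor
  · rintro ⟨i, rfl⟩
    have := hs ▸ mem_image_of_mem _ (mem_univ i)
    simp only [mem_Icc] at this
    omega
  · intro hv
    obtain ⟨i, -, hi⟩ := mem_image.1 (hs ▸ mem_Icc.2 (by omega : h + 2 ≤ v + 2 ∧ v + 2 ≤ _))
    exact ⟨i, by omega⟩

theorem IsSEMPerm.add_mem_Icc (hn : n = 2 * h + 1) (hσ : IsSEMPerm n σ) (i : Fin n) :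
    (i : ℕ) + σ i ∈ Icc h (3 * h) :=
  hσ.image_add hn ▸ mem_image_of_mem _ (mem_univ i)

theorem IsSEMPerm.exists_add_eq (hn : n = 2 * h + 1) (hσ : IsSEMPerm n σ) {v : ℕ}
    (hv : v ∈ Icc h (3 * h)) : ∃ i : Fin n, (i : ℕ) + σ i = v := by
  rw [← hσ.image_add hn] at hv
  simpa using hv

end SuperEdgeMagic

section Langford

variable {m d : ℕ} {l : Fin (2 * m) → ℕ}

theorem IsLangford.mem_Ico (hl : IsLangford m d l) (t : Fin (2 * m)) :
    l t ∈ Ico d (d + m) := by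
  have hfiber : ∀ k ∈ Ico d (d + m), #{t | l t = k} = 2 := by
    intro k hk
    have hk' := Finset.mem_Ico.1 hk
    obtain ⟨i, j, hij, -, hpair⟩ := hl k hk'.1 (by omega)
    rw [filter_congr fun t _ => hpair t, filter_or, filter_eq', filter_eq', if_pos (mem_univ _),
      if_pos (mem_univ _), card_union_of_disjoint (by simpa using hij.ne)]
    rfl
  set S := ({t | l t ∈ Ico d (d + m)} : Finset (Fin (2 * m)))
  have hfiberS : ∀ k ∈ Ico d (d + m), #{t ∈ S | l t = k} = 2 := fun k hk => by
    rw [filter_filter]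
    exact (congrArg card (filter_congr fun t _ => ⟨fun h => h.2, fun h => ⟨h ▸ hk, h⟩⟩)).trans
      (hfiber k hk)
  have hS : #S = 2 * m := by
    rw [card_eq_sum_card_fiberwise (f := l) (s := S) (t := Ico d (d + m))
      fun t ht => by simpa [S] using ht, sum_congr rfl hfiberS, sum_const, Nat.card_Ico,
      smul_eq_mul]
    omega
  have hSuniv : S = univ := eq_univ_of_card S (by simp [hS])
  have ht : t ∈ S := hSuniv ▸ mem_univ t
  simpa [S] using ht

instance (m d : ℕ) : Finite {l : Fin (2 * m) → ℕ // IsLangford m d l} :=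
  ((Set.Finite.pi' fun _ : Fin (2 * m) => Set.finite_Ico d (d + m)).subset
    fun _ hl t => by simpa using IsLangford.mem_Ico hl t).to_subtype

end Langford

section BlowUp

variable {N m d n h : ℕ}

def HasLaterCopy (l : Fin N → ℕ) (b : Fin N) : Prop :=
  ∃ b', b < b' ∧ l b' = l b

instance (l : Fin N → ℕ) : DecidablePred (HasLaterCopy l) := fun _ => by
  unfold HasLaterCopy; infer_instance

theorem not_hasLaterCopy {l : Fin N → ℕ} {a b : Fin N} (hab : a < b)
    (hpair : ∀ t, l t = l b → t = a ∨ t = b) : ¬ HasLaterCopy l b := by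
  rintro ⟨c, hbc, hc⟩
  rcases hpair c hc with rfl | rfl
  · exact lt_asymm hab hbc
  · exact lt_irrefl c hbc

/-- `x = (b, o)` is offset `o` in the block of position `b`, and `j` is the offset, in the block
of the first occurrence of `l b`, of the pair through `x`. -/
def blowUp (τ : ℕ → Perm (Fin n)) (l : Fin (2 * m) → ℕ) (x : Fin (2 * m) × Fin n) : ℕ :=
  let σ := τ (l x.1)
  let j := if HasLaterCopy l x.1 then x.2 else σ.symm x.2.rev
  n * l x.1 + (n - 1) - (j + σ j)

def blockEquiv (m n : ℕ) : Fin (2 * m) × Fin n ≃ Fin (2 * (m * n)) :=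
  finProdFinEquiv.trans (finCongr (by ring))

@[simp]
theorem blockEquiv_apply_val (x : Fin (2 * m) × Fin n) :
    (blockEquiv m n x : ℕ) = x.2 + n * x.1 :=
  rfl

variable {τ : ℕ → Perm (Fin n)} {l : Fin (2 * m) → ℕ} {b : Fin (2 * m)}

theorem blowUp_of_hasLaterCopy (hb : HasLaterCopy l b) (o : Fin n) :
    blowUp τ l (b, o) = n * l b + (n - 1) - (o + τ (l b) o) := by
  simp [blowUp, hb]

theorem blowUp_of_not_hasLaterCopy (hb : ¬ HasLaterCopy l b) (o : Fin n) :
    blowUp τ l (b, o) = n * l b + (n - 1) - ((τ (l b)).symm o.rev + o.rev) := by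
  simp [blowUp, hb]

variable (hn : n = 2 * h + 1) (hd : 0 < d) (hl : IsLangford m d l)
  (hτ : ∀ k ∈ Ico d (d + m), IsSEMPerm n (τ k))
include hn hd hl hτ

theorem blowUp_add_div (x : Fin (2 * m) × Fin n) : (blowUp τ l x + h) / n = l x.1 := by
  have hk := hl.mem_Ico x.1
  have hσ := (hτ _ hk).add_mem_Icc hn
  have hnk : n ≤ n * l x.1 := Nat.le_mul_of_pos_right n (hd.trans_le (mem_Ico.1 hk).1)
  obtain ⟨j, hj⟩ : ∃ j, blowUp τ l x = n * l x.1 + (n - 1) - (j + τ (l x.1) j) := ⟨_, rfl⟩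
  have := mem_Icc.1 (hσ j)
  apply Nat.div_eq_of_lt_le <;> rw [hj, mul_comm _ n] <;> [omega; (rw [mul_add]; omega)]

theorem blowUp_eq_blowUp_iff {a b : Fin (2 * m)} (hab : a < b)
    (hpair : ∀ t, l t = l a ↔ t = a ∨ t = b) (i : Fin n) (x : Fin (2 * m) × Fin n) :
    blowUp τ l x = blowUp τ l (a, i) ↔ x = (a, i) ∨ x = (b, (τ (l a) i).rev) := by
  have hlb : l b = l a := (hpair b).2 (Or.inr rfl)
  have hfirst : HasLaterCopy l a := ⟨b, hab, hlb⟩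
  have hsecond : ¬ HasLaterCopy l b := not_hasLaterCopy hab fun t ht => (hpair t).1 (ht.trans hlb)
  have hk := hl.mem_Ico a
  have hσ := hτ _ hk
  have hnk : n ≤ n * l a := Nat.le_mul_of_pos_right n (hd.trans_le (mem_Ico.1 hk).1)
  have hi := mem_Icc.1 (hσ.add_mem_Icc hn i)
  rw [blowUp_of_hasLaterCopy hfirst]
  constructor
  · intro hx
    have hblock : l x.1 = l a := by
      rw [← blowUp_add_div hn hd hl hτ x, hx, ← blowUp_of_hasLaterCopy hfirst,
        blowUp_add_div hn hd hl hτ]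
    obtain ⟨c, o⟩ := x
    rcases (hpair c).1 hblock with rfl | rfl
    · rw [blowUp_of_hasLaterCopy hfirst] at hx
      have ho := mem_Icc.1 (hσ.add_mem_Icc hn o)
      exact Or.inl (Prod.ext rfl (hσ.injective_add (by simp only; omega)))
    · rw [blowUp_of_not_hasLaterCopy hsecond, hlb] at hx
      have ho := mem_Icc.1 (hσ.add_mem_Icc hn ((τ (l a)).symm o.rev))
      rw [apply_symm_apply] at ho
      have hj : (τ (l a)).symm o.rev = i :=
        hσ.injective_add (by simp only; rw [apply_symm_apply]; omega)
      exact Or.inr (Prod.ext rfl (by rw [← hj, apply_symm_apply, Fin.rev_rev]))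
  · rintro (rfl | rfl)
    · rw [blowUp_of_hasLaterCopy hfirst]
    · rw [blowUp_of_not_hasLaterCopy hsecond, hlb, Fin.rev_rev, symm_apply_apply]

theorem isLangford_blowUp :
    IsLangford (m * n) (n * d - h) (blowUp τ l ∘ (blockEquiv m n).symm) := by
  intro K hK1 hK2
  set k := (K + h) / n
  set r := (K + h) % n
  have hKkr : K + h = n * k + r := (Nat.div_add_mod _ _).symm
  have hr : r < n := Nat.mod_lt _ (by omega)
  have hk : k ∈ Ico d (d + m) := by
    have hmn : m * n = n * m := mul_comm m n
    have hnd : n ≤ n * d := Nat.le_mul_of_pos_right n hd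
    have hlo : d ≤ k := (Nat.le_div_iff_mul_le (by omega)).2 (by rw [mul_comm]; omega)
    have hhi : k < d + m := (Nat.div_lt_iff_lt_mul (by omega)).2 (by
      rw [add_mul, mul_comm d, mul_comm m]; omega)
    exact mem_Ico.2 ⟨hlo, hhi⟩
  have hk' := mem_Ico.1 hk
  obtain ⟨a, b, hab, hdist, hpair⟩ := hl k hk'.1 (by omega)
  have hla : l a = k := (hpair a).2 (Or.inl rfl)
  have hfirst : HasLaterCopy l a := ⟨b, hab, ((hpair b).2 (Or.inr rfl)).trans hla.symm⟩
  obtain ⟨i, hi⟩ := (hτ k hk).exists_add_eq hn (v := 3 * h - r) (mem_Icc.2 ⟨by omega, by omega⟩)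
  have hnk : n ≤ n * k := Nat.le_mul_of_pos_right n (hd.trans_le hk'.1)
  have hval : blowUp τ l (a, i) = K := by
    rw [blowUp_of_hasLaterCopy hfirst, hla, hi]
    omega
  have hpos : n * a + n ≤ n * b := by rw [← mul_add_one]; exact Nat.mul_le_mul_left n hab
  have hσi : ((τ k i : Fin n) : ℕ) < n := (τ k i).2
  refine ⟨blockEquiv m n (a, i), blockEquiv m n (b, (τ k i).rev), ?_, ?_, fun t => ?_⟩
  · rw [Fin.lt_def, blockEquiv_apply_val, blockEquiv_apply_val]
    have := i.2
    simp only [Fin.val_rev]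
    omega
  · have hnb : n * b = n * a + n * k := by rw [← mul_add]; congr 1; omega
    simp only [blockEquiv_apply_val, Fin.val_rev]
    omega
  · obtain ⟨x, rfl⟩ := (blockEquiv m n).surjective t
    rw [comp_apply, symm_apply_apply, (blockEquiv m n).apply_eq_iff_eq,
      (blockEquiv m n).apply_eq_iff_eq, ← hval, ← hla]
    exact blowUp_eq_blowUp_iff hn hd hl hτ hab (fun t => hla ▸ hpair t) i x

omit hτ hl in
theorem eq_of_blowUp_eq {l₁ l₂ : Fin (2 * m) → ℕ} {τ₁ τ₂ : ℕ → Perm (Fin n)}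
    (hl₁ : IsLangford m d l₁) (hl₂ : IsLangford m d l₂)
    (hτ₁ : ∀ k ∈ Ico d (d + m), IsSEMPerm n (τ₁ k))
    (hτ₂ : ∀ k ∈ Ico d (d + m), IsSEMPerm n (τ₂ k)) (heq : blowUp τ₁ l₁ = blowUp τ₂ l₂) :
    l₁ = l₂ ∧ ∀ k ∈ Ico d (d + m), τ₁ k = τ₂ k := by
  obtain rfl : l₁ = l₂ := funext fun b => by
    rw [← blowUp_add_div hn hd hl₁ hτ₁ (b, ⟨0, by omega⟩), heq, blowUp_add_div hn hd hl₂ hτ₂]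
  refine ⟨rfl, fun k hk => ?_⟩
  have hk' := mem_Ico.1 hk
  obtain ⟨a, b, hab, -, hpair⟩ := hl₁ k hk'.1 (by omega)
  have hla : l₁ a = k := (hpair a).2 (Or.inl rfl)
  have hfirst : HasLaterCopy l₁ a := ⟨b, hab, ((hpair b).2 (Or.inr rfl)).trans hla.symm⟩
  have hnk : n ≤ n * k := Nat.le_mul_of_pos_right n (hd.trans_le hk'.1)
  ext i
  have hi := congrFun heq (a, i)
  rw [blowUp_of_hasLaterCopy hfirst, blowUp_of_hasLaterCopy hfirst, hla] at hi
  have := (τ₁ k i).2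
  have := (τ₂ k i).2
  omega

end BlowUp

section Families

variable {m n : ℕ}

noncomputable def semFamily (d : ℕ) (f : Fin m → {σ : Perm (Fin n) // IsSEMPerm n σ}) :
    ℕ → Perm (Fin n) :=
  extend (fun q : Fin m => d + (q : ℕ)) (fun q => (f q).1) 1

theorem semFamily_add (d : ℕ) (f : Fin m → {σ : Perm (Fin n) // IsSEMPerm n σ}) (q : Fin m) :
    semFamily d f (d + q) = f q :=
  ((add_right_injective d).comp Fin.val_injective).extend_apply _ _ q

theorem isSEMPerm_semFamily (d : ℕ) (f : Fin m → {σ : Perm (Fin n) // IsSEMPerm n σ}) :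
    ∀ k ∈ Ico d (d + m), IsSEMPerm n (semFamily d f k) := by
  intro k hk
  have hk' := mem_Ico.1 hk
  obtain ⟨q, rfl⟩ : ∃ q : Fin m, d + q = k := ⟨⟨k - d, by omega⟩, by simp only; omega⟩
  exact semFamily_add d f q ▸ (f q).2

theorem eq_of_semFamily_eq {d : ℕ} {f₁ f₂ : Fin m → {σ : Perm (Fin n) // IsSEMPerm n σ}}
    (heq : ∀ k ∈ Ico d (d + m), semFamily d f₁ k = semFamily d f₂ k) : f₁ = f₂ :=
  funext fun q => Subtype.ext <| by
    rw [← semFamily_add, ← semFamily_add, heq _ (mem_Ico.2 ⟨by omega, by omega⟩)]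

end Families

theorem langford_count_product_general (m d n : ℕ) (hd : 0 < d) (hodd : Odd n) :
    semPermCount n ^ m * langfordCount m d ≤ langfordCount (m * n) (n * d - (n - 1) / 2) := by
  obtain ⟨h, hnh⟩ := hodd
  rw [show n * d - (n - 1) / 2 = n * d - h by omega]
  let F (x : (Fin m → {σ : Perm (Fin n) // IsSEMPerm n σ}) × {l // IsLangford m d l}) :
      {L // IsLangford (m * n) (n * d - h) L} :=
    ⟨_, isLangford_blowUp hnh hd x.2.2 (isSEMPerm_semFamily d x.1)⟩
  have hF : Injective F := by
    rintro ⟨f₁, l₁, hl₁⟩ ⟨f₂, l₂, hl₂⟩ hF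
    obtain ⟨rfl, hτ⟩ := eq_of_blowUp_eq hnh hd hl₁ hl₂ (isSEMPerm_semFamily d f₁)
      (isSEMPerm_semFamily d f₂)
      ((blockEquiv m n).symm.surjective.injective_comp_right (congrArg Subtype.val hF))
    rw [eq_of_semFamily_eq hτ]
  calc semPermCount n ^ m * langfordCount m d
      = Nat.card ((Fin m → {σ : Perm (Fin n) // IsSEMPerm n σ}) × {l // IsLangford m d l}) := by
        simp [Nat.card_prod, Nat.card_pi, semPermCount, langfordCount]
    _ ≤ _ := Nat.card_le_card_of_injective F hF

/-- `λ_{mn}^{d'} ≥ s(n)^m · λ_m^d` where `d' = n*d - (n-1)/2`. -/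
theorem langford_count_product (m d n : ℕ) (hm : 0 < m) (hd : 0 < d) (hn : 0 < n)
    (hodd : Odd n) :
    semPermCount n ^ m * langfordCount m d ≤ langfordCount (m * n) (n * d - (n - 1) / 2) :=
  langford_count_product_general m d n hd hodd
end

section
/- For a positive integer m, a Skolem sequence of order m exists if and only if m ≡ 0 or 1 (mod 4). -/
/-- A Skolem sequence of order `m`, modeled as a function `l : Fin (2*m) → ℕ`:
for every `k ∈ [1, m]` there are exactly two subscripts carrying the value `k`,
and they differ by exactly `k`. -/
def IsSkolem (m : ℕ) (l : Fin (2 * m) → ℕ) : Prop :=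
  ∀ k : ℕ, 1 ≤ k → k ≤ m →
    ∃ i j : Fin (2 * m), i < j ∧ (j : ℕ) - (i : ℕ) = k ∧
      (∀ t : Fin (2 * m), l t = k ↔ t = i ∨ t = j)

/-- Start positions (0-indexed) for the construction when the order is `4*r`. -/
def skA (r k : ℕ) : ℕ :=
  if k = 1 then 7*r - 2
  else if k = 4*r - 1 then 2*r - 1
  else if k = 2*r then 2*r - 2
  else if k % 2 = 1 then 2*r - 2 - k/2
  else if 2*r + 2 ≤ k then 6*r - 1 - k/2
  else 6*r - 2 - k/2

/-- Start positions (0-indexed) for the construction when the order is `4*r+1`. -/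
def skB (r k : ℕ) : ℕ :=
  if k = 1 then 3*r - 1
  else if k = 4*r + 1 then 2*r - 1
  else if k = 2*r then 6*r + 1
  else if k % 2 = 1 then 6*r - k/2
  else if 2*r + 2 ≤ k then 2*r - k/2
  else 2*r - 1 - k/2

/-- Generic builder: a family of start positions whose pairs are in range and
pairwise disjoint yields a Skolem sequence. -/
lemma skolem_build (m : ℕ) (a : ℕ → ℕ)
    (hA : ∀ k, 1 ≤ k → k ≤ m → a k + k < 2 * m)
    (hB : ∀ k k', 1 ≤ k → k ≤ m → 1 ≤ k' → k' ≤ m →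
      (a k = a k' ∨ a k = a k' + k' ∨ a k + k = a k' ∨ a k + k = a k' + k') → k = k') :
    ∃ l : Fin (2 * m) → ℕ, IsSkolem m l := by
  classical
  refine ⟨fun t => (Finset.Icc 1 m).sup
      (fun k => if (t : ℕ) = a k ∨ (t : ℕ) = a k + k then k else 0), ?_⟩
  set L : Fin (2 * m) → ℕ := fun t => (Finset.Icc 1 m).sup
      (fun k => if (t : ℕ) = a k ∨ (t : ℕ) = a k + k then k else 0) with hLdef
  have key : ∀ (t : Fin (2 * m)) (k : ℕ), 1 ≤ k → k ≤ m →
      ((t : ℕ) = a k ∨ (t : ℕ) = a k + k) → L t = k := by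
    intro t k h1 h2 ht
    apply le_antisymm
    · apply Finset.sup_le
      intro k' hk'
      rw [Finset.mem_Icc] at hk'
      split_ifs with h'
      · have hkk : k' = k := hB k' k hk'.1 hk'.2 h1 h2 (by omega)
        omega
      · exact Nat.zero_le k
    · have hmem : k ∈ Finset.Icc 1 m := Finset.mem_Icc.mpr ⟨h1, h2⟩
      have := Finset.le_sup (f := fun k => if (t : ℕ) = a k ∨ (t : ℕ) = a k + k then k else 0)
        hmem
      simpa only [if_pos ht] using this
  have key2 : ∀ t : Fin (2 * m),
      (∀ k, 1 ≤ k → k ≤ m → ¬((t : ℕ) = a k ∨ (t : ℕ) = a k + k)) → L t = 0 := by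
    intro t h
    refine le_antisymm (Finset.sup_le ?_) (Nat.zero_le _)
    intro k' hk'
    rw [Finset.mem_Icc] at hk'
    rw [if_neg (h k' hk'.1 hk'.2)]
  intro k h1 h2
  have hb := hA k h1 h2
  refine ⟨⟨a k, by omega⟩, ⟨a k + k, hb⟩, ?_, ?_, ?_⟩
  · simp [Fin.lt_def]; omega
  · simp
  · intro t
    constructor
    · intro hlt
      by_cases hex : ∃ k', 1 ≤ k' ∧ k' ≤ m ∧ ((t : ℕ) = a k' ∨ (t : ℕ) = a k' + k')
      · obtain ⟨k', u1, u2, u3⟩ := hex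
        have hLk' := key t k' u1 u2 u3
        have hkk : k' = k := by rw [hlt] at hLk'; omega
        subst hkk
        rcases u3 with h | h
        · exact Or.inl (Fin.ext h)
        · exact Or.inr (Fin.ext h)
      · exfalso
        have h0 := key2 t (fun k' v1 v2 v3 => hex ⟨k', v1, v2, v3⟩)
        rw [hlt] at h0; omega
    · rintro (rfl | rfl)
      · exact key _ k h1 h2 (Or.inl rfl)
      · exact key _ k h1 h2 (Or.inr rfl)

lemma skA_bound (r : ℕ) (hr : 1 ≤ r) : ∀ k, 1 ≤ k → k ≤ 4*r → skA r k + k < 2 * (4*r) := by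
  intro k h1 h2
  unfold skA
  split_ifs <;> omega

lemma skA_disj (r : ℕ) (hr : 1 ≤ r) : ∀ k k', 1 ≤ k → k ≤ 4*r → 1 ≤ k' → k' ≤ 4*r →
    (skA r k = skA r k' ∨ skA r k = skA r k' + k' ∨
     skA r k + k = skA r k' ∨ skA r k + k = skA r k' + k') → k = k' := by
  intro k k' h1 h2 h3 h4 h
  unfold skA at h
  split_ifs at h <;> omega

lemma skB_bound (r : ℕ) : ∀ k, 1 ≤ k → k ≤ 4*r+1 → skB r k + k < 2 * (4*r+1) := by
  intro k h1 h2
  unfold skB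
  split_ifs <;> omega

lemma skB_disj (r : ℕ) : ∀ k k', 1 ≤ k → k ≤ 4*r+1 → 1 ≤ k' → k' ≤ 4*r+1 →
    (skB r k = skB r k' ∨ skB r k = skB r k' + k' ∨
     skB r k + k = skB r k' ∨ skB r k + k = skB r k' + k') → k = k' := by
  intro k k' h1 h2 h3 h4 h
  unfold skB at h
  split_ifs at h <;> omega

/-- A Skolem sequence of order `m` exists if and only if `m ≡ 0` or `1 (mod 4)`. -/
theorem skolem_exists_iff (m : ℕ) (hm : 0 < m) :
    (∃ l : Fin (2 * m) → ℕ, IsSkolem m l) ↔ m % 4 = 0 ∨ m % 4 = 1 := by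
  constructor
  · rintro ⟨l, hl⟩
    classical
    -- choose the pair of positions for each k
    have hpos : 0 < 2 * m := by omega
    have hch : ∀ k : ℕ, ∃ p : Fin (2*m) × Fin (2*m), 1 ≤ k → k ≤ m →
        p.1 < p.2 ∧ (p.2 : ℕ) - (p.1 : ℕ) = k ∧
        (∀ t : Fin (2*m), l t = k ↔ t = p.1 ∨ t = p.2) := by
      intro k
      by_cases h : 1 ≤ k ∧ k ≤ m
      · obtain ⟨i, j, hij⟩ := hl k h.1 h.2
        exact ⟨(i, j), fun _ _ => hij⟩
      · exact ⟨(⟨0, hpos⟩, ⟨0, hpos⟩), fun h1 h2 => absurd ⟨h1, h2⟩ h⟩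
    choose f hf using hch
    set F : ℕ → Finset (Fin (2*m)) := fun k => {(f k).1, (f k).2} with hF
    have hne : ∀ k, 1 ≤ k → k ≤ m → (f k).1 ≠ (f k).2 := by
      intro k h1 h2
      exact ne_of_lt ((hf k h1 h2).1)
    have hmemval : ∀ k, 1 ≤ k → k ≤ m → ∀ t ∈ F k, l t = k := by
      intro k h1 h2 t ht
      rw [hF] at ht
      simp only [Finset.mem_insert, Finset.mem_singleton] at ht
      exact ((hf k h1 h2).2.2 t).mpr ht
    have hdisj : ∀ k ∈ Finset.Icc 1 m, ∀ k' ∈ Finset.Icc 1 m, k ≠ k' →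
        Disjoint (F k) (F k') := by
      intro k hk k' hk' hne'
      rw [Finset.mem_Icc] at hk hk'
      rw [Finset.disjoint_left]
      intro t ht ht'
      have e1 := hmemval k hk.1 hk.2 t ht
      have e2 := hmemval k' hk'.1 hk'.2 t ht'
      exact hne' (by omega)
    have hcard : ((Finset.Icc 1 m).biUnion F).card = 2 * m := by
      rw [Finset.card_biUnion hdisj]
      have : ∀ k ∈ Finset.Icc 1 m, (F k).card = 2 := by
        intro k hk
        rw [Finset.mem_Icc] at hk
        exact Finset.card_pair (hne k hk.1 hk.2)
      rw [Finset.sum_congr rfl this, Finset.sum_const, Nat.card_Icc]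
      simp [Nat.mul_comm]
    have huniv : (Finset.Icc 1 m).biUnion F = Finset.univ := by
      apply Finset.eq_univ_of_card
      rw [hcard, Fintype.card_fin]
    -- the position sums
    have hsum : (∑ t : Fin (2*m), (t : ℕ)) =
        ∑ k ∈ Finset.Icc 1 m, (((f k).1 : ℕ) + ((f k).2 : ℕ)) := by
      rw [← huniv, Finset.sum_biUnion hdisj]
      apply Finset.sum_congr rfl
      intro k hk
      rw [Finset.mem_Icc] at hk
      rw [hF]
      exact Finset.sum_pair (hne k hk.1 hk.2)
    have hsplit : ∀ k ∈ Finset.Icc 1 m, (((f k).1 : ℕ) + ((f k).2 : ℕ))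
        = 2 * ((f k).1 : ℕ) + k := by
      intro k hk
      rw [Finset.mem_Icc] at hk
      have h := hf k hk.1 hk.2
      have hlt : ((f k).1 : ℕ) < ((f k).2 : ℕ) := h.1
      have hsub := h.2.1
      omega
    set X : ℕ := ∑ k ∈ Finset.Icc 1 m, ((f k).1 : ℕ) with hX
    set K : ℕ := ∑ k ∈ Finset.Icc 1 m, k with hK
    have e1 : (∑ t : Fin (2*m), (t : ℕ)) = 2 * X + K := by
      rw [hsum, Finset.sum_congr rfl hsplit, Finset.sum_add_distrib, ← Finset.mul_sum]
    have e2 : (∑ t : Fin (2*m), (t : ℕ)) * 2 = (2*m) * (2*m - 1) := by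
      rw [Fin.sum_univ_eq_sum_range (fun i => i) (2*m)]
      exact Finset.sum_range_id_mul_two (2*m)
    have hins : Finset.range (m+1) = insert 0 (Finset.Icc 1 m) := by
      ext x
      simp only [Finset.mem_range, Finset.mem_insert, Finset.mem_Icc]
      omega
    have e3 : K * 2 = m * (m + 1) := by
      have := Finset.sum_range_id_mul_two (m+1)
      rw [hins, Finset.sum_insert (by simp)] at this
      simpa [hK, Nat.mul_comm] using this
    obtain ⟨m', rfl⟩ : ∃ m', m = m' + 1 := ⟨m - 1, by omega⟩
    have hms : 2 * (m' + 1) - 1 = 2 * m' + 1 := by omega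
    rw [hms] at e2
    -- move to integers
    have e1' : ((∑ t : Fin (2*(m'+1)), (t : ℕ) : ℕ) : ℤ) = 2 * (X : ℤ) + (K : ℤ) := by
      exact_mod_cast congrArg (Nat.cast : ℕ → ℤ) e1
    have e2' : ((∑ t : Fin (2*(m'+1)), (t : ℕ) : ℕ) : ℤ) * 2
        = (2*((m' : ℤ)+1)) * (2*(m' : ℤ) + 1) := by exact_mod_cast congrArg (Nat.cast : ℕ → ℤ) e2
    have e3' : (K : ℤ) * 2 = ((m' : ℤ)+1) * ((m' : ℤ) + 2) := by
      exact_mod_cast congrArg (Nat.cast : ℕ → ℤ) e3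
    have hXeq : (X : ℤ) * 4 = 3 * (m' : ℤ) * (m' : ℤ) + 3 * (m' : ℤ) := by
      linear_combination e2' - 2 * e1' - e3'
    obtain ⟨q, hq⟩ : ∃ q, m' = 4*q ∨ m' = 4*q+1 ∨ m' = 4*q+2 ∨ m' = 4*q+3 :=
      ⟨m' / 4, by omega⟩
    rcases hq with hq | hq | hq | hq
    · subst hq; right; omega
    · subst hq
      exfalso
      have h2 : (X : ℤ) * 4 = 4 * (12 * ((q : ℤ) * (q : ℤ)) + 9 * (q : ℤ) + 1) + 2 := by
        push_cast at hXeq ⊢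
        linear_combination hXeq
      generalize (q : ℤ) * (q : ℤ) = Q at h2
      omega
    · subst hq
      exfalso
      have h2 : (X : ℤ) * 4 = 4 * (12 * ((q : ℤ) * (q : ℤ)) + 15 * (q : ℤ) + 4) + 2 := by
        push_cast at hXeq ⊢
        linear_combination hXeq
      generalize (q : ℤ) * (q : ℤ) = Q at h2
      omega
    · subst hq; left; omega
  · intro h
    rcases h with h0 | h1
    · obtain ⟨r, rfl, hr⟩ : ∃ r, m = 4*r ∧ 1 ≤ r := ⟨m / 4, by omega, by omega⟩
      exact skolem_build (4*r) (skA r) (skA_bound r hr) (skA_disj r hr)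
    · obtain ⟨r, rfl⟩ : ∃ r, m = 4*r + 1 := ⟨m / 4, by omega⟩
      exact skolem_build (4*r+1) (skB r) (skB_bound r) (skB_disj r)
end

section
/- For every odd positive integer n there exists a permutation σ of {1,...,n} such that the set {i + σ(i) : 1 ≤ i ≤ n} consists of n consecutive integers, and the map τ : {1,...,n} → {1,...,n} defined by τ(j) = σ(n+1-j) is an involution with exactly one fixed point. -/
/-- For every odd positive `n` there is a super edge-magic permutation `σ` of `{1,…,n}`
such that `τ(j) = σ(n+1-j)` (here `τ = σ ∘ Fin.rev`, since `Fin.rev` models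
`j ↦ n+1-j` on `Fin n`) is an involution with exactly one fixed point. -/
theorem exists_sem_perm_rotation_involution (n : ℕ) (hn : 0 < n) (hodd : Odd n) :
    ∃ σ : Equiv.Perm (Fin n), IsSEMPerm n σ ∧
      (∀ j : Fin n, σ (Fin.rev (σ (Fin.rev j))) = j) ∧
      (∃! j : Fin n, σ (Fin.rev j) = j) := by
  haveI : NeZero n := ⟨hn.ne'⟩
  obtain ⟨m, hm⟩ := hodd
  have hmn : m < n := by omega
  -- helper for eliminating `% n`
  have hmod : ∀ x : ℕ, x < n + n → (x % n = x ∧ x < n) ∨ (x % n = x - n ∧ n ≤ x) := by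
    intro x hx
    rcases lt_or_ge x n with h | h
    · exact Or.inl ⟨Nat.mod_eq_of_lt h, h⟩
    · exact Or.inr ⟨by rw [Nat.mod_eq_sub_mod h, Nat.mod_eq_of_lt (by omega)], h⟩
  have hcv : ((⟨m, hmn⟩ : Fin n) : ℕ) = m := rfl
  refine ⟨Equiv.addRight ⟨m, hmn⟩, ?_, ?_, ?_⟩
  · -- super edge-magic
    refine ⟨m + 2, ?_⟩
    have hf : ∀ i : Fin n, ((i : ℕ) + 1) + (((Equiv.addRight (⟨m, hmn⟩ : Fin n)) i : ℕ) + 1)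
        = (i : ℕ) + ((i : ℕ) + m) % n + 2 := by
      intro i
      simp only [Equiv.coe_addRight, Fin.add_def, hcv]
      ring
    apply Finset.eq_of_subset_of_card_le
    · intro x hx
      simp only [Finset.mem_image, Finset.mem_univ, true_and] at hx
      obtain ⟨i, hi⟩ := hx
      rw [hf i] at hi
      have hiv : (i : ℕ) < n := i.isLt
      rcases hmod ((i : ℕ) + m) (by omega) with ⟨h1, h2⟩ | ⟨h1, h2⟩ <;>
        simp only [Finset.mem_Icc] <;> omega
    · rw [Nat.card_Icc]
      have : (Finset.image
          (fun i : Fin n => ((i : ℕ) + 1) + (((Equiv.addRight (⟨m, hmn⟩ : Fin n)) i : ℕ) + 1))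
          Finset.univ).card = n := by
        rw [Finset.card_image_of_injective _ ?_, Finset.card_univ, Fintype.card_fin]
        intro i j hij
        simp only [hf] at hij
        have hiv : (i : ℕ) < n := i.isLt
        have hjv : (j : ℕ) < n := j.isLt
        rcases hmod ((i : ℕ) + m) (by omega) with ⟨h1, h2⟩ | ⟨h1, h2⟩ <;>
          rcases hmod ((j : ℕ) + m) (by omega) with ⟨h3, h4⟩ | ⟨h3, h4⟩ <;>
          exact Fin.ext (by omega)
      omega
  · -- involution
    intro j
    apply Fin.ext
    simp only [Equiv.coe_addRight, Fin.add_def, Fin.val_rev, hcv]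
    have hv : (j : ℕ) < n := j.isLt
    rcases hmod (n - ((j : ℕ) + 1) + m) (by omega) with ⟨h1, h2⟩ | ⟨h1, h2⟩ <;> rw [h1]
    · rcases hmod (n - ((n - ((j : ℕ) + 1) + m) + 1) + m) (by omega) with ⟨h3, h4⟩ | ⟨h3, h4⟩ <;>
        rw [h3] <;> omega
    · rcases hmod (n - ((n - ((j : ℕ) + 1) + m - n) + 1) + m) (by omega)
        with ⟨h3, h4⟩ | ⟨h3, h4⟩ <;> rw [h3] <;> omega
  · -- unique fixed point
    have key : ∀ j : Fin n, (Equiv.addRight (⟨m, hmn⟩ : Fin n)) (Fin.rev j) = j ↔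
        (n - ((j : ℕ) + 1) + m) % n = (j : ℕ) := by
      intro j
      constructor
      · intro h
        have := congrArg Fin.val h
        simpa [Equiv.coe_addRight, Fin.add_def, Fin.val_rev, hcv] using this
      · intro h
        apply Fin.ext
        simpa [Equiv.coe_addRight, Fin.add_def, Fin.val_rev, hcv] using h
    rcases Nat.mod_two_eq_zero_or_one m with hpar | hpar
    · -- m even : fixed point is 3m/2
      have hv0n : 3 * m / 2 < n := by omega
      refine ⟨⟨3 * m / 2, hv0n⟩, ?_, ?_⟩
      · show (Equiv.addRight (⟨m, hmn⟩ : Fin n)) (Fin.rev ⟨3 * m / 2, hv0n⟩) = ⟨3 * m / 2, hv0n⟩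
        rw [key]
        show (n - (3 * m / 2 + 1) + m) % n = 3 * m / 2
        rcases hmod (n - (3 * m / 2 + 1) + m) (by omega) with ⟨h1, h2⟩ | ⟨h1, h2⟩ <;>
          rw [h1] <;> omega
      · intro y hy
        rw [key] at hy
        apply Fin.ext
        show (y : ℕ) = 3 * m / 2
        have hyv : (y : ℕ) < n := y.isLt
        rcases hmod (n - ((y : ℕ) + 1) + m) (by omega) with ⟨h1, h2⟩ | ⟨h1, h2⟩ <;>
          rw [h1] at hy <;> omega
    · -- m odd : fixed point is (m-1)/2
      have hv0n : (m - 1) / 2 < n := by omega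
      refine ⟨⟨(m - 1) / 2, hv0n⟩, ?_, ?_⟩
      · show (Equiv.addRight (⟨m, hmn⟩ : Fin n)) (Fin.rev ⟨(m - 1) / 2, hv0n⟩) = ⟨(m - 1) / 2, hv0n⟩
        rw [key]
        show (n - ((m - 1) / 2 + 1) + m) % n = (m - 1) / 2
        rcases hmod (n - ((m - 1) / 2 + 1) + m) (by omega) with ⟨h1, h2⟩ | ⟨h1, h2⟩ <;>
          rw [h1] <;> omega
      · intro y hy
        rw [key] at hy
        apply Fin.ext
        show (y : ℕ) = (m - 1) / 2
        have hyv : (y : ℕ) < n := y.isLt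
        rcases hmod (n - ((y : ℕ) + 1) + m) (by omega) with ⟨h1, h2⟩ | ⟨h1, h2⟩ <;>
          rw [h1] at hy <;> omega
end

section
/- Let n ≥ 3 be an odd integer and define f : {1,...,n} → {1,...,n} by f(i) = (i+1)/2 if i is odd and f(i) = (n+i+1)/2 if i is even. Then f is a bijection and the set {f(i) + f(i+1) : 1 ≤ i ≤ n-1} ∪ {f(1) + f(n)} consists of n consecutive integers. -/
/-- The Kotzig–Rosa labeling of the odd cycle `C_n`: the map
`f(i) = (i+1)/2` for odd `i`, `f(i) = (n+i+1)/2` for even `i`, is a bijection of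
`{1,…,n}`, and the sums of labels of adjacent vertices of the cycle
(edges `v_i v_{i+1}` for `1 ≤ i ≤ n-1`, together with `v_1 v_n`)
form a set of `n` consecutive integers. -/
theorem kotzig_rosa_cycle_labeling (n : ℕ) (hn : 3 ≤ n) (hodd : Odd n)
    (f : ℕ → ℕ)
    (hf : ∀ i ∈ Set.Icc 1 n, f i = if Odd i then (i + 1) / 2 else (n + i + 1) / 2) :
    Set.BijOn f (Set.Icc 1 n) (Set.Icc 1 n) ∧
      ∃ s : ℕ,
        insert (f 1 + f n) ((Finset.Ico 1 n).image (fun i => f i + f (i + 1))) =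
          Finset.Icc s (s + n - 1) := by
  obtain ⟨m, hm⟩ := hodd
  have hm1 : 1 ≤ m := by omega
  -- explicit value lemma
  have hval : ∀ i, 1 ≤ i → i ≤ n →
      f i = if Odd i then (i + 1) / 2 else (n + i + 1) / 2 := by
    intro i h1 h2
    exact hf i ⟨h1, h2⟩
  have hodd_val : ∀ i, 1 ≤ i → i ≤ n → Odd i → f i = (i + 1) / 2 := by
    intro i h1 h2 ho
    rw [hval i h1 h2, if_pos ho]
  have heven_val : ∀ i, 1 ≤ i → i ≤ n → Even i → f i = (n + i + 1) / 2 := by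
    intro i h1 h2 he
    rw [hval i h1 h2, if_neg (Nat.not_odd_iff_even.mpr he)]
  have hf1 : f 1 = 1 := by
    have := hodd_val 1 le_rfl (by omega) ⟨0, rfl⟩
    omega
  have hfn : f n = m + 1 := by
    have := hodd_val n (by omega) le_rfl ⟨m, hm⟩
    omega
  -- sums of adjacent labels
  have hsum : ∀ i, 1 ≤ i → i < n → f i + f (i + 1) = m + 2 + i := by
    intro i h1 h2
    rcases Nat.even_or_odd i with he | ho
    · obtain ⟨k, hk⟩ := he
      have e1 := heven_val i h1 (by omega) ⟨k, hk⟩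
      have e2 := hodd_val (i + 1) (by omega) (by omega) ⟨k, by omega⟩
      omega
    · obtain ⟨k, hk⟩ := ho
      have e1 := hodd_val i h1 (by omega) ⟨k, hk⟩
      have e2 := heven_val (i + 1) (by omega) (by omega) ⟨k + 1, by omega⟩
      omega
  constructor
  · refine ⟨?_, ?_, ?_⟩
    · intro a ha
      simp only [Set.mem_Icc] at ha ⊢
      rcases Nat.even_or_odd a with ⟨k, hk⟩ | ⟨k, hk⟩
      · have := heven_val a ha.1 ha.2 ⟨k, hk⟩
        omega
      · have := hodd_val a ha.1 ha.2 ⟨k, hk⟩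
        omega
    · intro a ha b hb hab
      simp only [Set.mem_Icc] at ha hb
      rcases Nat.even_or_odd a with ⟨k, hk⟩ | ⟨k, hk⟩ <;>
        rcases Nat.even_or_odd b with ⟨l, hl⟩ | ⟨l, hl⟩
      · have e1 := heven_val a ha.1 ha.2 ⟨k, hk⟩
        have e2 := heven_val b hb.1 hb.2 ⟨l, hl⟩
        omega
      · have e1 := heven_val a ha.1 ha.2 ⟨k, hk⟩
        have e2 := hodd_val b hb.1 hb.2 ⟨l, hl⟩
        omega
      · have e1 := hodd_val a ha.1 ha.2 ⟨k, hk⟩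
        have e2 := heven_val b hb.1 hb.2 ⟨l, hl⟩
        omega
      · have e1 := hodd_val a ha.1 ha.2 ⟨k, hk⟩
        have e2 := hodd_val b hb.1 hb.2 ⟨l, hl⟩
        omega
    · intro y hy
      simp only [Set.mem_Icc] at hy
      by_cases hy2 : y ≤ m + 1
      · refine ⟨2 * y - 1, ⟨by omega, by omega⟩, ?_⟩
        have := hodd_val (2 * y - 1) (by omega) (by omega) ⟨y - 1, by omega⟩
        omega
      · refine ⟨2 * y - 2 * m - 2, ⟨by omega, by omega⟩, ?_⟩
        have := heven_val (2 * y - 2 * m - 2) (by omega) (by omega) ⟨y - m - 1, by omega⟩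
        omega
  · refine ⟨m + 2, ?_⟩
    ext x
    simp only [Finset.mem_insert, Finset.mem_image, Finset.mem_Ico, Finset.mem_Icc]
    constructor
    · rintro (rfl | ⟨i, ⟨hi1, hi2⟩, rfl⟩)
      · omega
      · have := hsum i hi1 hi2
        omega
    · intro hx
      by_cases hx2 : x = m + 2
      · left; omega
      · right
        refine ⟨x - m - 2, ⟨by omega, by omega⟩, ?_⟩
        have := hsum (x - m - 2) (by omega) (by omega)
        omega
end
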